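/- arXiv:1706.06830 — 3 statements merged into one kernel-verified Lean document; each statement's English description precedes it below -/
import Mathlib

section
/- Let N ≥ 2 and let q, q⁻ : ℝ^N → ℝ be smooth (C^∞). For λ ∈ ℝ define the Miwa shift (S_λ f)(t₁,…,t_N) = f(t₁ + λ, t₂ − λ²/2, …, t_j + (−1)^{j+1}λ^j/j, …, t_N + (−1)^{N+1}λ^N/N). Fix t ∈ ℝ^N. Then, as λ → 0, (1/λ)·( exp(S_λq(t) − q(t)) − 1 − (S_λq(t) − q(t)) ) − λ·exp( q(t) − S_λq⁻(t) ) = λ·( ½(∂₁q(t))² − exp(q(t) − q⁻(t)) ) + O(λ²). That is, the leading coefficient of the Miwa expansion of the discrete Toda Lagrangian is the continuous Toda Lagrangian density ½(∂₁q)² − exp(q − q⁻). -/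
/-- Partial derivative of a function on `ℝ^N` with respect to the `i`-th coordinate. -/
noncomputable def partialD {N : ℕ} (i : Fin N) (f : (Fin N → ℝ) → ℝ) : (Fin N → ℝ) → ℝ :=
  fun t => deriv (fun s => f (Function.update t i s)) (t i)

/-- Forward Miwa shift (with `c = 1`):
`(S_λ f)(t₁,…,t_N) = f(t₁ + λ, t₂ − λ²/2, …, t_j + (−1)^{j+1} λ^j / j, …)`. -/
noncomputable def miwaShift (N : ℕ) (lam : ℝ) (f : (Fin N → ℝ) → ℝ) : (Fin N → ℝ) → ℝ :=
  fun t => f (fun j => t j +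
    (-1 : ℝ) ^ (((j : ℕ) + 1) + 1) * lam ^ ((j : ℕ) + 1) / (((j : ℕ) + 1 : ℕ) : ℝ))


open Asymptotics Filter

/-- MVT bootstrapping: if `g 0 = 0` and `deriv g = O(x^n)` then `g = O(x^(n+1))`. -/
lemma mvt_bigO_step (g : ℝ → ℝ) (hg : Differentiable ℝ g) (hg0 : g 0 = 0) (n : ℕ)
    (h : (deriv g) =O[nhds (0:ℝ)] fun x => x ^ n) :
    g =O[nhds (0:ℝ)] fun x => x ^ (n+1) := by
  rw [isBigO_iff] at h ⊢
  obtain ⟨C, hC⟩ := h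
  refine ⟨|C|, ?_⟩
  rw [Metric.eventually_nhds_iff] at hC ⊢
  obtain ⟨δ, hδ, hCb⟩ := hC
  refine ⟨δ, hδ, fun {x} hx => ?_⟩
  simp only [dist_zero_right, Real.norm_eq_abs] at hx hCb ⊢
  have key : ∀ y ∈ Set.uIcc (0:ℝ) x, ‖deriv g y‖ ≤ |C| * |x| ^ n := by
    intro y hy
    have hyx : |y| ≤ |x| := by
      rcases Set.mem_uIcc.1 hy with h1 | h1 <;> rw [abs_le] <;>
        constructor <;> nlinarith [abs_nonneg x, le_abs_self x, neg_abs_le x, h1.1, h1.2]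
    have hyδ : |y| < δ := lt_of_le_of_lt hyx hx
    calc ‖deriv g y‖ ≤ C * |y ^ n| := hCb (by simpa using hyδ)
      _ ≤ |C| * |y| ^ n := by
          rw [abs_pow]; exact mul_le_mul_of_nonneg_right (le_abs_self C) (by positivity)
      _ ≤ |C| * |x| ^ n := by
          exact mul_le_mul_of_nonneg_left (pow_le_pow_left₀ (abs_nonneg y) hyx n) (abs_nonneg C)
  have := Convex.norm_image_sub_le_of_norm_deriv_le
    (fun y _ => hg.differentiableAt) key (convex_uIcc (0:ℝ) x)
    (Set.left_mem_uIcc) (Set.right_mem_uIcc)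
  rw [hg0, sub_zero, sub_zero, Real.norm_eq_abs, Real.norm_eq_abs] at this
  calc |g x| ≤ |C| * |x| ^ n * |x| := this
    _ = |C| * |x ^ (n+1)| := by rw [abs_pow, pow_succ]; ring

/-- Second-order Taylor bound. -/
lemma taylor2 (f : ℝ → ℝ) (hf : ContDiff ℝ (⊤ : ℕ∞) f) :
    (fun x => f x - f 0 - deriv f 0 * x) =O[nhds (0:ℝ)] fun x => x ^ 2 := by
  have hdf : ContDiff ℝ (⊤ : ℕ∞) (deriv f) :=
    (contDiff_infty_iff_deriv.mp (by exact_mod_cast hf)).2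
  have hfd : Differentiable ℝ f := hf.differentiable (by simp)
  have hdd : Differentiable ℝ (deriv f) := hdf.differentiable (by simp)
  have hg : Differentiable ℝ (fun x => f x - f 0 - deriv f 0 * x) := by
    fun_prop
  have hderiv : ∀ x, deriv (fun x => f x - f 0 - deriv f 0 * x) x = deriv f x - deriv f 0 := by
    intro x
    have h1 : HasDerivAt (fun x => f x - f 0 - deriv f 0 * x) (deriv f x - deriv f 0) x := by
      exact (((hfd x).hasDerivAt.sub_const (f 0)).sub
        ((hasDerivAt_id' x).const_mul (deriv f 0))).congr_deriv (by simp)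
    exact h1.deriv
  have h2 : (fun x : ℝ => deriv f x - deriv f 0) =O[nhds (0:ℝ)] fun x => x ^ 1 := by
    have := (hdd 0).isBigO_sub
    simpa using this
  have := mvt_bigO_step _ hg (by simp) 1 (by
    simpa only [funext hderiv] using h2)
  simpa using this

/-- Third-order Taylor bound when `f 0 = 0` and `f' 0 = 0`. -/
lemma taylor3 (f : ℝ → ℝ) (hf : ContDiff ℝ (⊤ : ℕ∞) f) (h0 : f 0 = 0) (h1 : deriv f 0 = 0) :
    (fun x => f x - deriv (deriv f) 0 / 2 * x ^ 2) =O[nhds (0:ℝ)] fun x => x ^ 3 := by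
  have hdf : ContDiff ℝ (⊤ : ℕ∞) (deriv f) :=
    (contDiff_infty_iff_deriv.mp (by exact_mod_cast hf)).2
  have hfd : Differentiable ℝ f := hf.differentiable (by simp)
  set c := deriv (deriv f) 0 with hc
  have hg : Differentiable ℝ (fun x => f x - c / 2 * x ^ 2) := by fun_prop
  have hderiv : ∀ x, deriv (fun x => f x - c / 2 * x ^ 2) x = deriv f x - c * x := by
    intro x
    have h1 : HasDerivAt (fun x => f x - c / 2 * x ^ 2) (deriv f x - c * x) x := by
      have := (hfd x).hasDerivAt.sub (((hasDerivAt_pow 2 x).const_mul (c / 2)))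
      refine this.congr_deriv ?_
      simp; ring
    exact h1.deriv
  have h2 : (fun x : ℝ => deriv f x - c * x) =O[nhds (0:ℝ)] fun x => x ^ 2 := by
    have := taylor2 (deriv f) hdf
    simpa [h1] using this
  have := mvt_bigO_step _ hg (by simp [h0]) 2 (by simpa only [funext hderiv] using h2)
  simpa using this

section curve
variable {N : ℕ} (t : Fin N → ℝ)

noncomputable def miwaCurve (t : Fin N → ℝ) : ℝ → (Fin N → ℝ) :=
  fun lam j => t j +
    (-1 : ℝ) ^ (((j : ℕ) + 1) + 1) * lam ^ ((j : ℕ) + 1) / (((j : ℕ) + 1 : ℕ) : ℝ)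

lemma miwaCurve_zero : miwaCurve t 0 = t := by
  funext j
  simp [miwaCurve, zero_pow (Nat.succ_ne_zero (j : ℕ))]

lemma miwaCurve_contDiff : ContDiff ℝ (⊤ : ℕ∞) (miwaCurve t) := by
  rw [contDiff_pi]
  intro j
  exact contDiff_const.add ((contDiff_const.mul (contDiff_id.pow _)).div_const _)

lemma miwaCurve_hasDerivAt (hN : 0 < N) :
    HasDerivAt (miwaCurve t) (Pi.single (⟨0, hN⟩ : Fin N) 1) 0 := by
  rw [hasDerivAt_pi]
  intro j
  have h : HasDerivAt (fun lam : ℝ => miwaCurve t lam j)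
      ((-1 : ℝ) ^ (((j : ℕ) + 1) + 1) *
        (((((j : ℕ) + 1 : ℕ)) : ℝ) * (0:ℝ) ^ (((j : ℕ) + 1) - 1)) / (((j : ℕ) + 1 : ℕ) : ℝ))
      0 := by
    unfold miwaCurve
    exact (((hasDerivAt_pow ((j : ℕ) + 1) (0:ℝ)).const_mul _).div_const _).const_add _
  refine h.congr_deriv ?_
  rcases Nat.eq_zero_or_pos (j : ℕ) with hj | hj
  · have hj0 : j = (⟨0, hN⟩ : Fin N) := by ext; exact hj
    subst hj0
    simp
  · have hjne : j ≠ (⟨0, hN⟩ : Fin N) := by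
      intro h'; rw [h'] at hj; simp at hj
    rw [Pi.single_eq_of_ne hjne]
    rw [zero_pow (by omega)]
    ring

end curve

lemma partialD_eq_fderiv {N : ℕ} (i : Fin N) (f : (Fin N → ℝ) → ℝ)
    (hf : ContDiff ℝ (⊤ : ℕ∞) f) (t : Fin N → ℝ) :
    partialD i f t = fderiv ℝ f t (Pi.single i 1) := by
  have hγ : ∀ s : ℝ, HasDerivAt (fun s => Function.update t i s) (Pi.single i 1) s := by
    intro s
    rw [hasDerivAt_pi]
    intro j
    by_cases hj : j = i
    · subst hj
      simp only [Function.update_self, Pi.single_eq_same]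
      exact hasDerivAt_id s
    · simp only [Function.update_of_ne hj, Pi.single_eq_of_ne hj]
      exact hasDerivAt_const s _
  have hc : HasDerivAt (fun s => f (Function.update t i s))
      (fderiv ℝ f (Function.update t i (t i)) (Pi.single i 1)) (t i) :=
    ((hf.differentiable (by simp)) _).hasFDerivAt.comp_hasDerivAt _ (hγ (t i))
  rw [Function.update_eq_self] at hc
  exact hc.deriv


/-- the leading coefficient of the Miwa expansion of the discrete Toda
Lagrangian is the continuous Toda Lagrangian density `½(∂₁q)² − exp(q − q⁻)`:
as `λ → 0`,
`(1/λ)(exp(S_λq−q) − 1 − (S_λq−q)) − λ exp(q − S_λq⁻)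
  = λ(½(∂₁q)² − exp(q−q⁻)) + O(λ²)`. -/
theorem toda_lagrangian_leading_coefficient (N : ℕ) (hN : 2 ≤ N)
    (q qm : (Fin N → ℝ) → ℝ) (hq : ContDiff ℝ (⊤ : ℕ∞) q) (hqm : ContDiff ℝ (⊤ : ℕ∞) qm)
    (t : Fin N → ℝ) :
    Asymptotics.IsBigO (nhds (0 : ℝ))
      (fun lam : ℝ =>
        (1 / lam) * (Real.exp (miwaShift N lam q t - q t) - 1 - (miwaShift N lam q t - q t))
          - lam * Real.exp (q t - miwaShift N lam qm t)
          - lam * ((1 / 2) * (partialD (⟨0, by omega⟩ : Fin N) q t) ^ 2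
              - Real.exp (q t - qm t)))
      (fun lam : ℝ => lam ^ 2) := by
  have hN0 : 0 < N := by omega
  set i0 : Fin N := ⟨0, hN0⟩ with hi0
  have hq' : ContDiff ℝ (⊤ : ℕ∞) q := hq.of_le (by simp)
  have hqm' : ContDiff ℝ (⊤ : ℕ∞) qm := hqm.of_le (by simp)
  set c : ℝ → (Fin N → ℝ) := miwaCurve t with hc
  set u : ℝ → ℝ := fun lam => q (c lam) - q t with hu_def
  set D : ℝ := fderiv ℝ q t (Pi.single i0 1) with hD_def
  have hu : ContDiff ℝ (⊤ : ℕ∞) u := (hq'.comp (miwaCurve_contDiff t)).sub contDiff_const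
  have hu_diff : Differentiable ℝ u := hu.differentiable (by simp)
  have hu0 : u 0 = 0 := by simp [hu_def, hc, miwaCurve_zero]
  have huD : HasDerivAt u D 0 := by
    have h1 : HasDerivAt (fun lam => q (c lam)) D 0 := by
      have hc0 : c 0 = t := miwaCurve_zero t
      have hft : HasFDerivAt q (fderiv ℝ q (c 0)) (c 0) :=
        ((hq'.differentiable (by simp)) (c 0)).hasFDerivAt
      have h2 := hft.comp_hasDerivAt 0 (miwaCurve_hasDerivAt t hN0)
      rw [hc0] at h2
      exact h2
    simpa [hu_def] using h1.sub_const (q t)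
  have hderiv_u0 : deriv u 0 = D := huD.deriv
  have hpd : partialD i0 q t = D := partialD_eq_fderiv i0 q hq' t
  -- the function F
  set F : ℝ → ℝ := fun lam => Real.exp (u lam) - 1 - u lam with hF_def
  have hF : ContDiff ℝ (⊤ : ℕ∞) F := (hu.exp.sub contDiff_const).sub hu
  have hF0 : F 0 = 0 := by simp [hF_def, hu0]
  have hFd : ∀ lam, HasDerivAt F (Real.exp (u lam) * deriv u lam - deriv u lam) lam := by
    intro lam
    exact (((Real.hasDerivAt_exp (u lam)).comp lam
      (hu_diff lam).hasDerivAt).sub_const 1).sub (hu_diff lam).hasDerivAt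
  have hF' : deriv F = fun lam => Real.exp (u lam) * deriv u lam - deriv u lam :=
    funext fun lam => (hFd lam).deriv
  have hF'0 : deriv F 0 = 0 := by
    rw [hF']; simp [hu0]
  -- second derivative of F at 0
  have hv : ContDiff ℝ (⊤ : ℕ∞) (deriv u) :=
    (contDiff_infty_iff_deriv.mp (by exact_mod_cast hu)).2
  have hv_diff : Differentiable ℝ (deriv u) := hv.differentiable (by simp)
  have hF''0 : deriv (deriv F) 0 = D ^ 2 := by
    rw [hF']
    have h1 : HasDerivAt (fun lam => Real.exp (u lam) * deriv u lam - deriv u lam)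
        ((Real.exp (u 0) * deriv u 0) * deriv u 0 + Real.exp (u 0) * deriv (deriv u) 0
          - deriv (deriv u) 0) 0 := by
      exact (((Real.hasDerivAt_exp (u 0)).comp 0 (hu_diff 0).hasDerivAt).mul
        (hv_diff 0).hasDerivAt).sub (hv_diff 0).hasDerivAt
    rw [h1.deriv, hu0, hderiv_u0]
    simp; ring
  -- big-O for the A part
  have hA3 : (fun lam => F lam - D ^ 2 / 2 * lam ^ 2) =O[nhds (0:ℝ)] fun lam => lam ^ 3 := by
    have := taylor3 F hF hF0 hF'0
    rwa [hF''0] at this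
  have hA : (fun lam : ℝ => (1 / lam) * F lam - lam * ((1/2) * D ^ 2))
      =O[nhds (0:ℝ)] fun lam => lam ^ 2 := by
    rw [isBigO_iff] at hA3 ⊢
    obtain ⟨C, hC⟩ := hA3
    refine ⟨C, ?_⟩
    filter_upwards [hC] with lam hlam
    rcases eq_or_ne lam 0 with rfl | hne
    · simp [hF0]
    · have heq : (1 / lam) * F lam - lam * ((1/2) * D ^ 2)
          = (F lam - D ^ 2 / 2 * lam ^ 2) / lam := by
        field_simp
      rw [heq, Real.norm_eq_abs, abs_div]
      rw [Real.norm_eq_abs, Real.norm_eq_abs] at hlam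
      rw [div_le_iff₀ (abs_pos.mpr hne)]
      calc |F lam - D ^ 2 / 2 * lam ^ 2| ≤ C * |lam ^ 3| := hlam
        _ = C * |lam ^ 2| * |lam| := by
            rw [abs_pow, abs_pow, pow_succ, mul_assoc]
  -- big-O for the B part
  set G : ℝ → ℝ := fun lam => Real.exp (q t - qm (c lam)) with hG_def
  have hG : ContDiff ℝ (⊤ : ℕ∞) G :=
    ((contDiff_const.sub (hqm'.comp (miwaCurve_contDiff t))).exp)
  have hB : (fun lam : ℝ => lam * (G lam - G 0)) =O[nhds (0:ℝ)] fun lam => lam ^ 2 := by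
    have h1 : (fun lam : ℝ => G lam - G 0) =O[nhds (0:ℝ)] fun lam => lam - 0 :=
      ((hG.differentiable (by simp)) 0).isBigO_sub
    have h2 := (isBigO_refl (fun lam : ℝ => lam) (nhds (0:ℝ))).mul h1
    refine h2.trans (isBigO_of_le _ fun lam => ?_)
    simp [sq, abs_mul]
  -- assemble
  have key := hA.sub hB
  refine key.congr_left fun lam => ?_
  have hms : miwaShift N lam q t = q (c lam) := rfl
  have hms2 : miwaShift N lam qm t = qm (c lam) := rfl
  have hqm0 : Real.exp (q t - qm t) = G 0 := by
    rw [hG_def]; simp [hc, miwaCurve_zero]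
  rw [hms, hms2]
  simp only [hF_def, hu_def, hG_def, hpd, hqm0, hG_def]
  ring
end

section
/- Let v : ℝ⁴ → ℝ be smooth (C^∞), with coordinates t₁, …, t₄, and write subscripts for partial derivatives. Suppose v₂ ≡ 0, v₁(t) ≠ 0 for all t, and v₃ = −(3/2)v₁₁²/v₁ + v₁₁₁ identically on ℝ⁴. Then F₀₃ := (8/3)v₁₁v₁₁₁ − (4/3)v₁v₁₁₁₁ + 4v₁₁v₁₂ + (4/3)v₁v₁₃ + (4/3)v₁₁₁v₂ + 2v₁₂v₂ + v₁v₂₂ + (4/3)v₁₁v₃ + (2/3)v₂v₃ + v₁v₄ equals v₁·v₄ identically. Consequently F₀₃ ≡ 0 if and only if v₄ ≡ 0. -/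
/-- Partial derivative of a function on `ℝ^N` with respect to the `i`-th coordinate. -/
noncomputable def pd {N : ℕ} (i : Fin N) (f : (Fin N → ℝ) → ℝ) : (Fin N → ℝ) → ℝ :=
  fun t => deriv (fun s => f (Function.update t i s)) (t i)


lemma pd_hasDerivAt {N : ℕ} {f : (Fin N → ℝ) → ℝ} (hf : ContDiff ℝ (⊤ : ℕ∞) f) (i : Fin N)
    (t : Fin N → ℝ) :
    HasDerivAt (fun s => f (Function.update t i s)) (pd i f t) (t i) := by
  have h : DifferentiableAt ℝ (fun s => f (Function.update t i s)) (t i) := by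
    exact ((hf.differentiable (by simp)).differentiableAt).comp _
      (hasDerivAt_update t i (t i)).differentiableAt
  exact h.hasDerivAt

lemma pd_eq_fderiv {N : ℕ} {f : (Fin N → ℝ) → ℝ} (hf : ContDiff ℝ (⊤ : ℕ∞) f) (i : Fin N)
    (t : Fin N → ℝ) : pd i f t = fderiv ℝ f t (Pi.single i 1) := by
  have h : HasFDerivAt f (fderiv ℝ f t) (Function.update t i (t i)) := by
    rw [Function.update_eq_self]
    exact (hf.differentiable (by simp) t).hasFDerivAt
  exact (h.comp_hasDerivAt (t i) (hasDerivAt_update t i (t i))).deriv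

lemma pd_contDiff {N : ℕ} {f : (Fin N → ℝ) → ℝ} (hf : ContDiff ℝ (⊤ : ℕ∞) f) (i : Fin N) :
    ContDiff ℝ (⊤ : ℕ∞) (pd i f) := by
  have : pd i f = fun t => fderiv ℝ f t (Pi.single i 1) := funext (pd_eq_fderiv hf i)
  rw [this]
  exact (hf.fderiv_right (by simp)).clm_apply contDiff_const

lemma key_pd02 (v : (Fin 4 → ℝ) → ℝ) (hv : ContDiff ℝ (⊤ : ℕ∞) v)
    (h1ne : ∀ t, pd 0 v t ≠ 0)
    (h3 : ∀ t, pd 2 v t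
      = -(3 / 2) * (pd 0 (pd 0 v) t) ^ 2 / pd 0 v t + pd 0 (pd 0 (pd 0 v)) t)
    (t : Fin 4 → ℝ) :
    pd 0 (pd 2 v) t
      = (-(3 / 2) * (2 * pd 0 (pd 0 v) t * pd 0 (pd 0 (pd 0 v)) t) * pd 0 v t
          - -(3 / 2) * (pd 0 (pd 0 v) t) ^ 2 * pd 0 (pd 0 v) t) / (pd 0 v t) ^ 2
        + pd 0 (pd 0 (pd 0 (pd 0 v))) t := by
  have hu : ContDiff ℝ (⊤ : ℕ∞) (pd 0 v) := pd_contDiff hv 0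
  have hw : ContDiff ℝ (⊤ : ℕ∞) (pd 0 (pd 0 v)) := pd_contDiff hu 0
  have hx : ContDiff ℝ (⊤ : ℕ∞) (pd 0 (pd 0 (pd 0 v))) := pd_contDiff hw 0
  have hA := pd_hasDerivAt hu 0 t
  have hB := pd_hasDerivAt hw 0 t
  have hC := pd_hasDerivAt hx 0 t
  have hAne : (fun s => pd 0 v (Function.update t 0 s)) (t 0) ≠ 0 := by
    simp only [Function.update_eq_self]
    exact h1ne t
  have hF : HasDerivAt
      (fun s => -(3 / 2) * (pd 0 (pd 0 v) (Function.update t 0 s)) ^ 2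
          / pd 0 v (Function.update t 0 s)
          + pd 0 (pd 0 (pd 0 v)) (Function.update t 0 s))
      ((-(3 / 2) * (2 * pd 0 (pd 0 v) t * pd 0 (pd 0 (pd 0 v)) t) * pd 0 v t
          - -(3 / 2) * (pd 0 (pd 0 v) t) ^ 2 * pd 0 (pd 0 v) t) / (pd 0 v t) ^ 2
        + pd 0 (pd 0 (pd 0 (pd 0 v))) t) (t 0) := by
    have h := (((hB.pow 2).const_mul (-(3 / 2) : ℝ)).div hA hAne).add hC
    refine h.congr_deriv ?_
    simp only [Function.update_eq_self, Pi.pow_apply]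
    push_cast
    ring
  have h3' : pd 2 v = fun x =>
      -(3 / 2) * (pd 0 (pd 0 v) x) ^ 2 / pd 0 v x + pd 0 (pd 0 (pd 0 v)) x := funext h3
  rw [show pd 0 (pd 2 v) t
      = deriv (fun s => pd 2 v (Function.update t 0 s)) (t 0) from rfl, h3']
  exact hF.deriv

/-- for smooth `v : ℝ⁴ → ℝ` with `v₂ ≡ 0`, `v₁ ≠ 0` everywhere, and
`v₃ = −(3/2)v₁₁²/v₁ + v₁₁₁` identically, the Miwa coefficient
`F₀₃ = (8/3)v₁₁v₁₁₁ − (4/3)v₁v₁₁₁₁ + 4v₁₁v₁₂ + (4/3)v₁v₁₃ + (4/3)v₁₁₁v₂ + 2v₁₂v₂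
 + v₁v₂₂ + (4/3)v₁₁v₃ + (2/3)v₂v₃ + v₁v₄` equals `v₁·v₄` identically;
consequently `F₀₃ ≡ 0` iff `v₄ ≡ 0`. -/
theorem q1_miwa_coefficient_F03 (v : (Fin 4 → ℝ) → ℝ) (hv : ContDiff ℝ (⊤ : ℕ∞) v)
    (h2 : ∀ t, pd 1 v t = 0)
    (h1ne : ∀ t, pd 0 v t ≠ 0)
    (h3 : ∀ t, pd 2 v t
      = -(3 / 2) * (pd 0 (pd 0 v) t) ^ 2 / pd 0 v t + pd 0 (pd 0 (pd 0 v)) t) :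
    (∀ t, (8 / 3) * pd 0 (pd 0 v) t * pd 0 (pd 0 (pd 0 v)) t
        - (4 / 3) * pd 0 v t * pd 0 (pd 0 (pd 0 (pd 0 v))) t
        + 4 * pd 0 (pd 0 v) t * pd 0 (pd 1 v) t
        + (4 / 3) * pd 0 v t * pd 0 (pd 2 v) t
        + (4 / 3) * pd 0 (pd 0 (pd 0 v)) t * pd 1 v t
        + 2 * pd 0 (pd 1 v) t * pd 1 v t
        + pd 0 v t * pd 1 (pd 1 v) t
        + (4 / 3) * pd 0 (pd 0 v) t * pd 2 v t
        + (2 / 3) * pd 1 v t * pd 2 v t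
        + pd 0 v t * pd 3 v t
      = pd 0 v t * pd 3 v t)
    ∧ ((∀ t, (8 / 3) * pd 0 (pd 0 v) t * pd 0 (pd 0 (pd 0 v)) t
          - (4 / 3) * pd 0 v t * pd 0 (pd 0 (pd 0 (pd 0 v))) t
          + 4 * pd 0 (pd 0 v) t * pd 0 (pd 1 v) t
          + (4 / 3) * pd 0 v t * pd 0 (pd 2 v) t
          + (4 / 3) * pd 0 (pd 0 (pd 0 v)) t * pd 1 v t
          + 2 * pd 0 (pd 1 v) t * pd 1 v t
          + pd 0 v t * pd 1 (pd 1 v) t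
          + (4 / 3) * pd 0 (pd 0 v) t * pd 2 v t
          + (2 / 3) * pd 1 v t * pd 2 v t
          + pd 0 v t * pd 3 v t = 0)
        ↔ (∀ t, pd 3 v t = 0)) := by
  have hz : pd 1 v = fun _ => (0 : ℝ) := funext h2
  have hmain : ∀ t, (8 / 3) * pd 0 (pd 0 v) t * pd 0 (pd 0 (pd 0 v)) t
        - (4 / 3) * pd 0 v t * pd 0 (pd 0 (pd 0 (pd 0 v))) t
        + 4 * pd 0 (pd 0 v) t * pd 0 (pd 1 v) t
        + (4 / 3) * pd 0 v t * pd 0 (pd 2 v) t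
        + (4 / 3) * pd 0 (pd 0 (pd 0 v)) t * pd 1 v t
        + 2 * pd 0 (pd 1 v) t * pd 1 v t
        + pd 0 v t * pd 1 (pd 1 v) t
        + (4 / 3) * pd 0 (pd 0 v) t * pd 2 v t
        + (2 / 3) * pd 1 v t * pd 2 v t
        + pd 0 v t * pd 3 v t
      = pd 0 v t * pd 3 v t := by
    intro t
    have z01 : pd 0 (pd 1 v) t = 0 := by rw [hz]; simp [pd]
    have z11 : pd 1 (pd 1 v) t = 0 := by rw [hz]; simp [pd]
    rw [h2 t, h3 t, key_pd02 v hv h1ne h3 t, z01, z11]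
    have ha := h1ne t
    field_simp
    ring
  refine ⟨hmain, ?_, ?_⟩
  · intro h t
    have h0 := h t
    rw [hmain t] at h0
    rcases mul_eq_zero.mp h0 with h' | h'
    · exact absurd h' (h1ne t)
    · exact h'
  · intro h t
    rw [hmain t, h t, mul_zero]
end

section
/- Let m ≥ 1, let F : ℝ^{(m+1)×(m+1)} → ℝ be smooth (C^∞), with arguments indexed by pairs (a, b), 0 ≤ a, b ≤ m, and partial derivatives ∂_{(a,b)}F, and let u : ℝ² → ℝ be smooth. Define the jet J(x, y) ∈ ℝ^{(m+1)×(m+1)} by J(x, y)_{(a,b)} = (∂₁^a ∂₂^b u)(x, y), and for 0 ≤ a, b ≤ m define E_{a,b}(x, y) = Σ_{k=0}^{m−a} Σ_{l=0}^{m−b} (−1)^{k+l} ∂₁^k ∂₂^l [ (∂_{(a+k,b+l)}F)(J(x, y)) ]. Then for all 0 ≤ a, b ≤ m−1 and all (x, y) ∈ ℝ²: (∂_{(a,b)}F)(J(x, y)) = E_{a,b}(x, y) + ∂₁E_{a+1,b}(x, y) + ∂₂E_{a,b+1}(x, y) + ∂₁∂₂E_{a+1,b+1}(x, y). -/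
/-- Partial derivative with respect to the first coordinate of `ℝ × ℝ`. -/
noncomputable def D1 (f : ℝ × ℝ → ℝ) : ℝ × ℝ → ℝ :=
  fun p => deriv (fun s => f (s, p.2)) p.1

/-- Partial derivative with respect to the second coordinate of `ℝ × ℝ`. -/
noncomputable def D2 (f : ℝ × ℝ → ℝ) : ℝ × ℝ → ℝ :=
  fun p => deriv (fun s => f (p.1, s)) p.2

open Finset

section Aux

lemma sliceCD1 {f : ℝ × ℝ → ℝ} (hf : ContDiff ℝ (⊤ : ℕ∞) f) (y : ℝ) :
    ContDiff ℝ (⊤ : ℕ∞) (fun s : ℝ => f (s, y)) :=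
  hf.comp (contDiff_id.prodMk contDiff_const)

lemma sliceCD2 {f : ℝ × ℝ → ℝ} (hf : ContDiff ℝ (⊤ : ℕ∞) f) (x : ℝ) :
    ContDiff ℝ (⊤ : ℕ∞) (fun s : ℝ => f (x, s)) :=
  hf.comp (contDiff_const.prodMk contDiff_id)

lemma D1_eq {f : ℝ × ℝ → ℝ} (hf : Differentiable ℝ f) :
    D1 f = fun p => fderiv ℝ f p (1, 0) := by
  funext p
  have h1 : HasDerivAt (fun s : ℝ => (s, p.2)) ((1 : ℝ), (0 : ℝ)) p.1 :=
    (hasDerivAt_id p.1).prodMk (hasDerivAt_const p.1 p.2)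
  have h2 : HasFDerivAt f (fderiv ℝ f p) (p.1, p.2) := by
    rw [Prod.mk.eta]; exact (hf p).hasFDerivAt
  have h3 := h2.comp_hasDerivAt p.1 h1
  simpa [D1, Function.comp_def] using h3.deriv

lemma D2_eq {f : ℝ × ℝ → ℝ} (hf : Differentiable ℝ f) :
    D2 f = fun p => fderiv ℝ f p (0, 1) := by
  funext p
  have h1 : HasDerivAt (fun s : ℝ => (p.1, s)) ((0 : ℝ), (1 : ℝ)) p.2 :=
    (hasDerivAt_const p.2 p.1).prodMk (hasDerivAt_id p.2)
  have h2 : HasFDerivAt f (fderiv ℝ f p) (p.1, p.2) := by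
    rw [Prod.mk.eta]; exact (hf p).hasFDerivAt
  have h3 := h2.comp_hasDerivAt p.2 h1
  simpa [D2, Function.comp_def] using h3.deriv

lemma contDiff_D1 {f : ℝ × ℝ → ℝ} (hf : ContDiff ℝ (⊤ : ℕ∞) f) : ContDiff ℝ (⊤ : ℕ∞) (D1 f) := by
  rw [D1_eq (hf.differentiable (by simp))]
  exact (hf.fderiv_right (by simp)).clm_apply contDiff_const

lemma contDiff_D2 {f : ℝ × ℝ → ℝ} (hf : ContDiff ℝ (⊤ : ℕ∞) f) : ContDiff ℝ (⊤ : ℕ∞) (D2 f) := by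
  rw [D2_eq (hf.differentiable (by simp))]
  exact (hf.fderiv_right (by simp)).clm_apply contDiff_const

lemma contDiff_D1_iter {f : ℝ × ℝ → ℝ} (hf : ContDiff ℝ (⊤ : ℕ∞) f) (k : ℕ) :
    ContDiff ℝ (⊤ : ℕ∞) (D1^[k] f) := by
  induction k with
  | zero => simpa using hf
  | succ n ih => rw [Function.iterate_succ_apply']; exact contDiff_D1 ih

lemma contDiff_D2_iter {f : ℝ × ℝ → ℝ} (hf : ContDiff ℝ (⊤ : ℕ∞) f) (k : ℕ) :
    ContDiff ℝ (⊤ : ℕ∞) (D2^[k] f) := by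
  induction k with
  | zero => simpa using hf
  | succ n ih => rw [Function.iterate_succ_apply']; exact contDiff_D2 ih

lemma D1_D2_comm {f : ℝ × ℝ → ℝ} (hf : ContDiff ℝ (⊤ : ℕ∞) f) : D2 (D1 f) = D1 (D2 f) := by
  have hdf : Differentiable ℝ f := hf.differentiable (by simp)
  have hf' : ContDiff ℝ (⊤ : ℕ∞) (fderiv ℝ f) := hf.fderiv_right (by simp)
  have hdf' : Differentiable ℝ (fderiv ℝ f) := hf'.differentiable (by simp)
  funext p
  have hA : HasFDerivAt (fderiv ℝ f) (fderiv ℝ (fderiv ℝ f) p) p := (hdf' p).hasFDerivAt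
  have key : ∀ v : ℝ × ℝ, HasFDerivAt (fun q => fderiv ℝ f q v)
      ((ContinuousLinearMap.apply ℝ ℝ v).comp (fderiv ℝ (fderiv ℝ f) p)) p := fun v =>
    ((ContinuousLinearMap.apply ℝ ℝ v).hasFDerivAt).comp p hA
  have hDv : ∀ v : ℝ × ℝ, Differentiable ℝ (fun q => fderiv ℝ f q v) := fun v =>
    (hf'.clm_apply contDiff_const).differentiable (by simp)
  rw [D1_eq hdf, D2_eq hdf, D2_eq (hDv _), D1_eq (hDv _)]
  simp only
  rw [(key (1, 0)).fderiv, (key (0, 1)).fderiv]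
  simpa using (second_derivative_symmetric (fun y => (hdf y).hasFDerivAt) hA (1, 0) (0, 1)).symm

lemma D2_D1_iter_comm {f : ℝ × ℝ → ℝ} (hf : ContDiff ℝ (⊤ : ℕ∞) f) (k : ℕ) :
    D2 (D1^[k] f) = D1^[k] (D2 f) := by
  induction k with
  | zero => rfl
  | succ n ih =>
    rw [Function.iterate_succ_apply', D1_D2_comm (contDiff_D1_iter hf n), ih]
    exact (Function.iterate_succ_apply' D1 n (D2 f)).symm

lemma D1_sum_apply {ι : Type*} (s : Finset ι) (g : ι → ℝ × ℝ → ℝ)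
    (hg : ∀ i ∈ s, ContDiff ℝ (⊤ : ℕ∞) (g i)) (p : ℝ × ℝ) :
    D1 (fun q => ∑ i ∈ s, g i q) p = ∑ i ∈ s, D1 (g i) p := by
  simp only [D1]
  exact deriv_fun_sum fun i hi =>
    (((sliceCD1 (hg i hi) p.2)).differentiable (by simp)).differentiableAt

lemma D2_sum_apply {ι : Type*} (s : Finset ι) (g : ι → ℝ × ℝ → ℝ)
    (hg : ∀ i ∈ s, ContDiff ℝ (⊤ : ℕ∞) (g i)) (p : ℝ × ℝ) :
    D2 (fun q => ∑ i ∈ s, g i q) p = ∑ i ∈ s, D2 (g i) p := by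
  simp only [D2]
  exact deriv_fun_sum fun i hi =>
    (((sliceCD2 (hg i hi) p.1)).differentiable (by simp)).differentiableAt

lemma D1_const_mul_apply (c : ℝ) {g : ℝ × ℝ → ℝ} (hg : ContDiff ℝ (⊤ : ℕ∞) g) (p : ℝ × ℝ) :
    D1 (fun q => c * g q) p = c * D1 g p := by
  simp only [D1]
  exact deriv_const_mul c (((sliceCD1 hg p.2).differentiable (by simp)).differentiableAt)

lemma D2_const_mul_apply (c : ℝ) {g : ℝ × ℝ → ℝ} (hg : ContDiff ℝ (⊤ : ℕ∞) g) (p : ℝ × ℝ) :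
    D2 (fun q => c * g q) p = c * D2 g p := by
  simp only [D2]
  exact deriv_const_mul c (((sliceCD2 hg p.1).differentiable (by simp)).differentiableAt)

lemma D1_double {s t : Finset ℕ} {g : ℕ → ℕ → ℝ × ℝ → ℝ}
    (hg : ∀ k l, ContDiff ℝ (⊤ : ℕ∞) (g k l)) (p : ℝ × ℝ) :
    D1 (fun q => ∑ k ∈ s, ∑ l ∈ t, g k l q) p = ∑ k ∈ s, ∑ l ∈ t, D1 (g k l) p := by
  refine (D1_sum_apply s (fun k q => ∑ l ∈ t, g k l q)
    (fun k _ => ContDiff.sum fun l _ => hg k l) p).trans ?_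
  exact Finset.sum_congr rfl fun k _ => D1_sum_apply t (g k) (fun l _ => hg k l) p

lemma D2_double {s t : Finset ℕ} {g : ℕ → ℕ → ℝ × ℝ → ℝ}
    (hg : ∀ k l, ContDiff ℝ (⊤ : ℕ∞) (g k l)) (p : ℝ × ℝ) :
    D2 (fun q => ∑ k ∈ s, ∑ l ∈ t, g k l q) p = ∑ k ∈ s, ∑ l ∈ t, D2 (g k l) p := by
  refine (D2_sum_apply s (fun k q => ∑ l ∈ t, g k l q)
    (fun k _ => ContDiff.sum fun l _ => hg k l) p).trans ?_
  exact Finset.sum_congr rfl fun k _ => D2_sum_apply t (g k) (fun l _ => hg k l) p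

lemma D2_double_fun {s t : Finset ℕ} {g : ℕ → ℕ → ℝ × ℝ → ℝ}
    (hg : ∀ k l, ContDiff ℝ (⊤ : ℕ∞) (g k l)) :
    D2 (fun q => ∑ k ∈ s, ∑ l ∈ t, g k l q) = fun p => ∑ k ∈ s, ∑ l ∈ t, D2 (g k l) p :=
  funext fun p => D2_double hg p

lemma finsum_conv (N M : ℕ) (f : ℕ → ℕ → ℝ) :
    (∑ k : Fin N, ∑ l : Fin M, f (k : ℕ) (l : ℕ))
      = ∑ k ∈ range N, ∑ l ∈ range M, f k l := by
  refine (Fin.sum_univ_eq_sum_range (fun k => ∑ l : Fin M, f k (l : ℕ)) N).trans ?_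
  exact Finset.sum_congr rfl fun k _ => Fin.sum_univ_eq_sum_range (f k) M

lemma sum_telescope_2d (T : ℕ → ℕ → ℝ) (n1 n2 : ℕ) :
    (∑ k ∈ range (n1 + 1), ∑ l ∈ range (n2 + 1), T k l)
      + (∑ k ∈ range n1, ∑ l ∈ range (n2 + 1), -(T (k + 1) l))
      + (∑ k ∈ range (n1 + 1), ∑ l ∈ range n2, -(T k (l + 1)))
      + (∑ k ∈ range n1, ∑ l ∈ range n2, T (k + 1) (l + 1)) = T 0 0 := by
  have A : ∀ (M : ℕ) (f : ℕ → ℕ → ℝ), (∑ k ∈ range (n1 + 1), ∑ l ∈ range M, f k l)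
      = (∑ k ∈ range n1, ∑ l ∈ range M, f (k + 1) l) + ∑ l ∈ range M, f 0 l := fun M f =>
    Finset.sum_range_succ' (fun k => ∑ l ∈ range M, f k l) n1
  rw [A (n2 + 1) T, A n2 (fun k l => -(T k (l + 1))),
    Finset.sum_range_succ' (fun l => T 0 l) n2]
  simp only [Finset.sum_neg_distrib]
  ring

lemma telescope_abstract (φ : ℕ → ℕ → ℝ × ℝ → ℝ) (hφ : ∀ i j, ContDiff ℝ (⊤ : ℕ∞) (φ i j))
    (a b n1 n2 : ℕ) (p : ℝ × ℝ) :
    (∑ k ∈ range (n1 + 1), ∑ l ∈ range (n2 + 1),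
        (-1 : ℝ) ^ (k + l) * D1^[k] (D2^[l] (φ (a + k) (b + l))) p)
      + D1 (fun q => ∑ k ∈ range n1, ∑ l ∈ range (n2 + 1),
          (-1 : ℝ) ^ (k + l) * D1^[k] (D2^[l] (φ (a + 1 + k) (b + l))) q) p
      + D2 (fun q => ∑ k ∈ range (n1 + 1), ∑ l ∈ range n2,
          (-1 : ℝ) ^ (k + l) * D1^[k] (D2^[l] (φ (a + k) (b + 1 + l))) q) p
      + D1 (D2 (fun q => ∑ k ∈ range n1, ∑ l ∈ range n2,
          (-1 : ℝ) ^ (k + l) * D1^[k] (D2^[l] (φ (a + 1 + k) (b + 1 + l))) q)) p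
      = φ a b p := by
  have hsm : ∀ (i j k l : ℕ), ContDiff ℝ (⊤ : ℕ∞) (D1^[k] (D2^[l] (φ i j))) := fun i j k l =>
    contDiff_D1_iter (contDiff_D2_iter (hφ i j) l) k
  have hsm' : ∀ (i j k l : ℕ),
      ContDiff ℝ (⊤ : ℕ∞) (fun q => (-1 : ℝ) ^ (k + l) * D1^[k] (D2^[l] (φ i j)) q) :=
    fun i j k l => contDiff_const.mul (hsm i j k l)
  have h2 : D1 (fun q => ∑ k ∈ range n1, ∑ l ∈ range (n2 + 1),
      (-1 : ℝ) ^ (k + l) * D1^[k] (D2^[l] (φ (a + 1 + k) (b + l))) q) p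
      = ∑ k ∈ range n1, ∑ l ∈ range (n2 + 1),
        -((-1 : ℝ) ^ (k + 1 + l) * D1^[k + 1] (D2^[l] (φ (a + (k + 1)) (b + l))) p) := by
    refine (D1_double (g := fun k l => fun q =>
      (-1 : ℝ) ^ (k + l) * D1^[k] (D2^[l] (φ (a + 1 + k) (b + l))) q)
      (fun k l => hsm' _ _ _ _) p).trans ?_
    refine Finset.sum_congr rfl fun k _ => Finset.sum_congr rfl fun l _ => ?_
    rw [D1_const_mul_apply _ (hsm _ _ _ _) p,
      show D1 (D1^[k] (D2^[l] (φ (a + 1 + k) (b + l))))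
        = D1^[k + 1] (D2^[l] (φ (a + 1 + k) (b + l)))
        from (Function.iterate_succ_apply' D1 k _).symm,
      show a + 1 + k = a + (k + 1) by omega,
      show ((-1 : ℝ)) ^ (k + 1 + l) = -(-1 : ℝ) ^ (k + l) by
        rw [show k + 1 + l = (k + l) + 1 by omega, pow_succ]; ring]
    ring
  have h3 : D2 (fun q => ∑ k ∈ range (n1 + 1), ∑ l ∈ range n2,
      (-1 : ℝ) ^ (k + l) * D1^[k] (D2^[l] (φ (a + k) (b + 1 + l))) q) p
      = ∑ k ∈ range (n1 + 1), ∑ l ∈ range n2,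
        -((-1 : ℝ) ^ (k + (l + 1)) * D1^[k] (D2^[l + 1] (φ (a + k) (b + (l + 1)))) p) := by
    refine (D2_double (g := fun k l => fun q =>
      (-1 : ℝ) ^ (k + l) * D1^[k] (D2^[l] (φ (a + k) (b + 1 + l))) q)
      (fun k l => hsm' _ _ _ _) p).trans ?_
    refine Finset.sum_congr rfl fun k _ => Finset.sum_congr rfl fun l _ => ?_
    rw [D2_const_mul_apply _ (hsm _ _ _ _) p,
      D2_D1_iter_comm (contDiff_D2_iter (hφ _ _) l) k,
      ← Function.iterate_succ_apply' D2 l,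
      show b + 1 + l = b + (l + 1) by omega,
      show ((-1 : ℝ)) ^ (k + (l + 1)) = -(-1 : ℝ) ^ (k + l) by
        rw [show k + (l + 1) = (k + l) + 1 by omega, pow_succ]; ring]
    ring
  have hmixfun : D2 (fun q => ∑ k ∈ range n1, ∑ l ∈ range n2,
      (-1 : ℝ) ^ (k + l) * D1^[k] (D2^[l] (φ (a + 1 + k) (b + 1 + l))) q)
      = fun q => ∑ k ∈ range n1, ∑ l ∈ range n2,
        (-1 : ℝ) ^ (k + l) * D1^[k] (D2^[l + 1] (φ (a + 1 + k) (b + 1 + l))) q := by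
    refine (D2_double_fun (g := fun k l => fun q =>
      (-1 : ℝ) ^ (k + l) * D1^[k] (D2^[l] (φ (a + 1 + k) (b + 1 + l))) q)
      (fun k l => hsm' _ _ _ _)).trans ?_
    funext q
    refine Finset.sum_congr rfl fun k _ => Finset.sum_congr rfl fun l _ => ?_
    rw [D2_const_mul_apply _ (hsm _ _ _ _) q,
      D2_D1_iter_comm (contDiff_D2_iter (hφ _ _) l) k,
      ← Function.iterate_succ_apply' D2 l]
  have h4 : D1 (D2 (fun q => ∑ k ∈ range n1, ∑ l ∈ range n2,
      (-1 : ℝ) ^ (k + l) * D1^[k] (D2^[l] (φ (a + 1 + k) (b + 1 + l))) q)) p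
      = ∑ k ∈ range n1, ∑ l ∈ range n2,
        (-1 : ℝ) ^ (k + 1 + (l + 1))
          * D1^[k + 1] (D2^[l + 1] (φ (a + (k + 1)) (b + (l + 1)))) p := by
    rw [hmixfun]
    refine (D1_double (g := fun k l => fun q =>
      (-1 : ℝ) ^ (k + l) * D1^[k] (D2^[l + 1] (φ (a + 1 + k) (b + 1 + l))) q)
      (fun k l => contDiff_const.mul (hsm _ _ _ _)) p).trans ?_
    refine Finset.sum_congr rfl fun k _ => Finset.sum_congr rfl fun l _ => ?_
    rw [D1_const_mul_apply _ (hsm _ _ _ _) p,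
      show D1 (D1^[k] (D2^[l + 1] (φ (a + 1 + k) (b + 1 + l))))
        = D1^[k + 1] (D2^[l + 1] (φ (a + 1 + k) (b + 1 + l)))
        from (Function.iterate_succ_apply' D1 k _).symm,
      show a + 1 + k = a + (k + 1) by omega,
      show b + 1 + l = b + (l + 1) by omega,
      show ((-1 : ℝ)) ^ (k + 1 + (l + 1)) = (-1 : ℝ) ^ (k + l) by
        rw [show k + 1 + (l + 1) = (k + l) + 2 by omega, pow_add]; norm_num]
  rw [h2, h3, h4]
  refine (sum_telescope_2d
    (fun k l => (-1 : ℝ) ^ (k + l) * D1^[k] (D2^[l] (φ (a + k) (b + l))) p) n1 n2).trans ?_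
  simp

end Aux

/-- two-dimensional telescoping decomposition of partial derivatives
into truncated mixed variational derivatives: for `0 ≤ a, b ≤ m−1`,
`∂_{(a,b)}F(J) = E_{a,b} + ∂₁E_{a+1,b} + ∂₂E_{a,b+1} + ∂₁∂₂E_{a+1,b+1}`, where
`E_{a,b} = Σ_{k=0}^{m−a} Σ_{l=0}^{m−b} (−1)^{k+l} ∂₁^k ∂₂^l [(∂_{(a+k,b+l)}F)(J)]`
and `J_{(a,b)} = ∂₁^a ∂₂^b u`. -/
theorem variational_derivative_telescoping_2d (m : ℕ) (hm : 1 ≤ m)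
    (F : (Fin (m + 1) × Fin (m + 1) → ℝ) → ℝ) (hF : ContDiff ℝ (⊤ : ℕ∞) F)
    (u : ℝ × ℝ → ℝ) (hu : ContDiff ℝ (⊤ : ℕ∞) u)
    (J : ℝ × ℝ → Fin (m + 1) × Fin (m + 1) → ℝ)
    (hJ : ∀ (p : ℝ × ℝ) (a b : Fin (m + 1)),
      J p (a, b) = (D1^[(a : ℕ)] (D2^[(b : ℕ)] u)) p)
    (pF : Fin (m + 1) × Fin (m + 1) → (Fin (m + 1) × Fin (m + 1) → ℝ) → ℝ)
    (hpF : ∀ (i : Fin (m + 1) × Fin (m + 1)) (x : Fin (m + 1) × Fin (m + 1) → ℝ),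
      pF i x = deriv (fun s => F (Function.update x i s)) (x i))
    (E : ℕ → ℕ → ℝ × ℝ → ℝ)
    (hE : ∀ (a b : ℕ) (ha : a ≤ m) (hb : b ≤ m) (p : ℝ × ℝ),
      E a b p = ∑ k : Fin (m - a + 1), ∑ l : Fin (m - b + 1),
        (-1 : ℝ) ^ ((k : ℕ) + (l : ℕ)) *
          (D1^[(k : ℕ)] (D2^[(l : ℕ)]
            (fun r => pF (⟨a + (k : ℕ), by have := k.isLt; omega⟩,
                          ⟨b + (l : ℕ), by have := l.isLt; omega⟩) (J r)))) p) :
    ∀ (a b : ℕ) (ha : a ≤ m - 1) (hb : b ≤ m - 1) (p : ℝ × ℝ),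
      pF (⟨a, by omega⟩, ⟨b, by omega⟩) (J p)
        = E a b p + D1 (E (a + 1) b) p + D2 (E a (b + 1)) p
          + D1 (D2 (E (a + 1) (b + 1))) p := by
  intro a b ha hb p
  have hFd : Differentiable ℝ F := hF.differentiable (by simp)
  -- pF is evaluation of the Fréchet derivative at a basis vector
  have hpF' : ∀ i x, pF i x = fderiv ℝ F x (Pi.single i 1) := by
    intro i x
    rw [hpF i x]
    have h1 : HasFDerivAt F (fderiv ℝ F x) (Function.update x i (x i)) := by
      rw [Function.update_eq_self]; exact (hFd x).hasFDerivAt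
    have h2 := h1.comp_hasDerivAt (x i) (hasDerivAt_update x i (x i))
    simpa [Function.comp_def] using h2.deriv
  -- J is smooth
  have hJs : ContDiff ℝ (⊤ : ℕ∞) J := by
    rw [contDiff_pi]
    intro i
    have e : (fun p => J p i) = D1^[(i.1 : ℕ)] (D2^[(i.2 : ℕ)] u) := by
      funext q; exact hJ q i.1 i.2
    rw [e]
    exact contDiff_D1_iter (contDiff_D2_iter hu _) _
  -- total-index version of the integrand functions
  obtain ⟨φ, hφdef⟩ : ∃ φ : ℕ → ℕ → ℝ × ℝ → ℝ, ∀ i j r,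
      φ i j r = if h : i ≤ m ∧ j ≤ m then
          pF (⟨i, by omega⟩, ⟨j, by omega⟩) (J r) else 0 :=
    ⟨_, fun _ _ _ => rfl⟩
  have hφval : ∀ i j (h1 : i ≤ m) (h2 : j ≤ m),
      φ i j = fun r => pF (⟨i, by omega⟩, ⟨j, by omega⟩) (J r) := by
    intro i j h1 h2
    funext r
    rw [hφdef, dif_pos ⟨h1, h2⟩]
  have hφs : ∀ i j, ContDiff ℝ (⊤ : ℕ∞) (φ i j) := by
    intro i j
    by_cases h : i ≤ m ∧ j ≤ m
    · rw [hφval i j h.1 h.2]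
      have e : (fun r => pF ((⟨i, by omega⟩ : Fin (m + 1)), (⟨j, by omega⟩ : Fin (m + 1))) (J r))
          = fun r => fderiv ℝ F (J r)
              (Pi.single ((⟨i, by omega⟩ : Fin (m + 1)), (⟨j, by omega⟩ : Fin (m + 1))) 1) := by
        funext r; rw [hpF']
      rw [e]
      exact ((hF.fderiv_right (by simp)).comp hJs).clm_apply contDiff_const
    · have e : φ i j = fun _ => 0 := by
        funext r; rw [hφdef, dif_neg h]
      rw [e]; exact contDiff_const
  -- rewrite E in terms of φ and range-sums
  have master : ∀ (a' b' : ℕ), a' ≤ m → b' ≤ m → ∀ q : ℝ × ℝ,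
      E a' b' q = ∑ k ∈ range (m - a' + 1), ∑ l ∈ range (m - b' + 1),
        (-1 : ℝ) ^ (k + l) * D1^[k] (D2^[l] (φ (a' + k) (b' + l))) q := by
    intro a' b' ha' hb' q
    rw [hE a' b' ha' hb' q]
    refine Eq.trans (Finset.sum_congr rfl fun k _ => Finset.sum_congr rfl fun l _ => ?_)
      (finsum_conv _ _ _)
    have h1 : a' + (k : ℕ) ≤ m := by have := k.isLt; omega
    have h2 : b' + (l : ℕ) ≤ m := by have := l.isLt; omega
    rw [hφval _ _ h1 h2]
  have key1 : m - (a + 1) + 1 = m - a - 1 + 1 := by omega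
  have hE2 : E (a + 1) b = fun q => ∑ k ∈ range (m - a), ∑ l ∈ range (m - b + 1),
      (-1 : ℝ) ^ (k + l) * D1^[k] (D2^[l] (φ (a + 1 + k) (b + l))) q := by
    funext q
    rw [master (a + 1) b (by omega) (by omega) q, show m - (a + 1) + 1 = m - a by omega]
  have hE3 : E a (b + 1) = fun q => ∑ k ∈ range (m - a + 1), ∑ l ∈ range (m - b),
      (-1 : ℝ) ^ (k + l) * D1^[k] (D2^[l] (φ (a + k) (b + 1 + l))) q := by
    funext q
    rw [master a (b + 1) (by omega) (by omega) q, show m - (b + 1) + 1 = m - b by omega]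
  have hE4 : E (a + 1) (b + 1) = fun q => ∑ k ∈ range (m - a), ∑ l ∈ range (m - b),
      (-1 : ℝ) ^ (k + l) * D1^[k] (D2^[l] (φ (a + 1 + k) (b + 1 + l))) q := by
    funext q
    rw [master (a + 1) (b + 1) (by omega) (by omega) q,
      show m - (a + 1) + 1 = m - a by omega, show m - (b + 1) + 1 = m - b by omega]
  have hL : pF (⟨a, by omega⟩, ⟨b, by omega⟩) (J p) = φ a b p := by
    rw [hφval a b (by omega) (by omega)]
  rw [hL, master a b (by omega) (by omega) p, hE2, hE3, hE4]
  exact (telescope_abstract φ hφs a b (m - a) (m - b) p).symm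
end
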